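/- Suppose λ ≤ √(r/(e·ρ²·n)) for some 0 < r < 1, and let κ_α be the planted-submatrix cumulants. If α is connected, spans vertex 1, and 1 ≤ |α| ≤ log₂(1/ρ) − 1, then (1/2)·λ^{|α|}·ρ^{|V(α)|} ≤ κ_α ≤ λ^{|α|}·ρ^{|V(α)|}. -/

import Mathlib

variable {n : ℕ}

/-- Number of edges of a multigraph (with multiplicity), where the multigraph on `[n]`
is given by edge multiplicities `α : Sym2 (Fin n) → ℕ` (self-loops allowed). -/
def mgEdges (α : Sym2 (Fin n) → ℕ) : ℕ := ∑ e, α e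

/-- The set of vertices spanned by the multigraph `α`. -/
def mgVerts (α : Sym2 (Fin n) → ℕ) : Set (Fin n) := {v | ∃ e, α e ≠ 0 ∧ v ∈ e}

/-- The multigraph `α` is connected: any two spanned vertices are joined by a path of edges. -/
def mgConnected (α : Sym2 (Fin n) → ℕ) : Prop :=
  ∀ u ∈ mgVerts α, ∀ v ∈ mgVerts α,
    Relation.ReflTransGen (fun a b => α s(a, b) ≠ 0) u v

/-- `E[X^α] = λ^{|α|}·ρ^{|V(α)|}` in the planted submatrix model, where `X_{ij} = λ v_i v_j`
with `v` i.i.d. `Bernoulli(ρ)`. -/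
noncomputable def momX (lam ρ : ℝ) (α : Sym2 (Fin n) → ℕ) : ℝ :=
  lam ^ mgEdges α * ρ ^ (mgVerts α).ncard

/-- `E[x·X^α] = λ^{|α|}·ρ^{|V(α)∪{1}|}` in the planted submatrix model, where `x = v_1`. -/
noncomputable def momxX (lam ρ : ℝ) (v1 : Fin n) (α : Sym2 (Fin n) → ℕ) : ℝ :=
  lam ^ mgEdges α * ρ ^ (insert v1 (mgVerts α)).ncard

/-- `κ` satisfies the defining recursion of the cumulant quantities `κ_α`:
`κ_α = E[x X^α] − Σ_{0 ≤ β ⪇ α} κ_β·binom(α,β)·E[X^{α−β}]`. -/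
def KappaRec (lam ρ : ℝ) (v1 : Fin n) (κ : (Sym2 (Fin n) → ℕ) → ℝ) : Prop :=
  ∀ α : Sym2 (Fin n) → ℕ,
    κ α = momxX lam ρ v1 α
      - ∑ β ∈ (Finset.Icc 0 α).erase α,
          κ β * (∏ e, ((α e).choose (β e) : ℝ)) * momX lam ρ (fun e => α e - β e)

/-! The recursion expresses `E[x X^α]` as `Σ_{β ≤ α} κ_β binom(α,β) E[X^{α-β}]`. If `α` splits
into two parts with disjoint vertex sets, the second avoiding vertex `1`, then both moments
factor, and induction shows that `κ` vanishes on all split multigraphs; hence `κ_β ≠ 0` only for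
connected `β` through vertex `1`. For connected `α` through vertex `1`, `E[x X^α] = E[X^α]`.
Two nonzero complementary parts `β`, `α - β` of a connected `α` share a vertex, so
`|V(β)| + |V(α-β)| ≥ |V(α)| + 1`, and by induction each term of the recursion lies between `0`
and `binom(α,β) ρ E[X^α]`. The binomials sum to `2^{|α|} - 1`, so the correction is at most
`ρ 2^{|α|} E[X^α] ≤ E[X^α] / 2`. -/

theorem Relation.ReflTransGen.mem_of_closed {V : Type*} {r : V → V → Prop} {S : Set V}
    (hS : ∀ a b, r a b → a ∈ S → b ∈ S) {u w : V} (h : Relation.ReflTransGen r u w)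
    (hu : u ∈ S) : w ∈ S := by
  induction h with
  | refl => exact hu
  | tail _ hbc ih => exact hS _ _ hbc ih

section Multigraph

variable {α β γ : Sym2 (Fin n) → ℕ}

theorem mgEdges_add : mgEdges (β + γ) = mgEdges β + mgEdges γ :=
  Finset.sum_add_distrib

theorem mgEdges_mono (h : β ≤ α) : mgEdges β ≤ mgEdges α :=
  Finset.sum_le_sum fun e _ => h e

@[simp]
theorem mgVerts_zero : mgVerts (0 : Sym2 (Fin n) → ℕ) = ∅ := by
  ext v
  simp [mgVerts]

theorem mgVerts_nonempty (h : α ≠ 0) : (mgVerts α).Nonempty := by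
  obtain ⟨e, he⟩ := Function.ne_iff.1 h
  induction e using Sym2.ind with
  | _ a b => exact ⟨a, s(a, b), he, Sym2.mem_mk_left a b⟩

theorem mgVerts_mono (h : β ≤ α) : mgVerts β ⊆ mgVerts α :=
  fun _ ⟨e, he, hv⟩ => ⟨e, fun h0 => he (Nat.eq_zero_of_le_zero (h0 ▸ h e)), hv⟩

theorem mgVerts_add : mgVerts (β + γ) = mgVerts β ∪ mgVerts γ := by
  ext v
  simp only [mgVerts, Pi.add_apply, Set.mem_ofPred_eq, Set.mem_union, ne_eq,
    Nat.add_eq_zero_iff, not_and_or, or_and_right, exists_or]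

theorem eq_zero_or_eq_zero_of_disjoint_mgVerts (h : Disjoint (mgVerts β) (mgVerts γ))
    (e : Sym2 (Fin n)) : β e = 0 ∨ γ e = 0 := by
  by_contra! hne
  induction e using Sym2.ind with
  | _ a b =>
    exact Set.disjoint_left.1 h ⟨_, hne.1, Sym2.mem_mk_left a b⟩ ⟨_, hne.2, Sym2.mem_mk_left a b⟩

theorem mgVerts_inter_nonempty (hconn : mgConnected (β + γ)) (hβ : β ≠ 0) (hγ : γ ≠ 0) :
    (mgVerts β ∩ mgVerts γ).Nonempty := by
  by_contra hdisj
  rw [Set.not_nonempty_iff_eq_empty, ← Set.disjoint_iff_inter_eq_empty] at hdisj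
  obtain ⟨u, hu⟩ := mgVerts_nonempty hβ
  obtain ⟨w, hw⟩ := mgVerts_nonempty hγ
  have hclosed : ∀ a b, (β + γ) s(a, b) ≠ 0 → a ∈ mgVerts β → b ∈ mgVerts β := by
    intro a b hab ha
    rcases eq_zero_or_eq_zero_of_disjoint_mgVerts hdisj s(a, b) with h | h
    · exact absurd ⟨_, by simpa [h] using hab, Sym2.mem_mk_left a b⟩
        (Set.disjoint_left.1 hdisj ha)
    · exact ⟨_, by simpa [h] using hab, Sym2.mem_mk_right a b⟩
  have hwβ := (hconn u (mgVerts_add ▸ Or.inl hu) w (mgVerts_add ▸ Or.inr hw)).mem_of_closed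
    hclosed hu
  exact Set.disjoint_left.1 hdisj hwβ hw

theorem ncard_mgVerts_add_lt (hconn : mgConnected (β + γ)) (hβ : β ≠ 0) (hγ : γ ≠ 0) :
    (mgVerts (β + γ)).ncard < (mgVerts β).ncard + (mgVerts γ).ncard := by
  have hinter := (Set.ncard_pos (Set.toFinite _)).2 (mgVerts_inter_nonempty hconn hβ hγ)
  have := Set.ncard_union_add_ncard_inter (mgVerts β) (mgVerts γ)
  rw [← mgVerts_add] at this
  omega

theorem mgVerts_indicator_sym2_subset (S : Set (Fin n)) : mgVerts (S.sym2.indicator α) ⊆ S := by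
  rintro u ⟨e, he, hu⟩
  by_contra huS
  exact he (Set.indicator_of_notMem (fun heS => huS (Set.mem_sym2_iff_subset.1 heS hu)) α)

theorem indicator_sym2_add_indicator_sym2_compl {S : Set (Fin n)}
    (hS : ∀ a b, α s(a, b) ≠ 0 → (a ∈ S ↔ b ∈ S)) :
    S.sym2.indicator α + Sᶜ.sym2.indicator α = α := by
  ext e
  induction e using Sym2.ind with
  | _ a b =>
    by_cases hab : α s(a, b) = 0
    · simp [hab]
    · by_cases ha : a ∈ S <;> simp [Set.mk_mem_sym2_iff, ha, ← hS a b hab]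

theorem exists_split_of_not_connected {v : Fin n} (hα : α ≠ 0)
    (h : ¬(mgConnected α ∧ v ∈ mgVerts α)) :
    ∃ α₁ α₂, α₁ + α₂ = α ∧ α₂ ≠ 0 ∧ Disjoint (insert v (mgVerts α₁)) (mgVerts α₂) := by
  set S := {u | Relation.ReflTransGen (fun a b => α s(a, b) ≠ 0) v u}
  have hsplit : S.sym2.indicator α + Sᶜ.sym2.indicator α = α :=
    indicator_sym2_add_indicator_sym2_compl fun a b hab =>
      ⟨fun ha => ha.tail hab, fun hb => hb.tail (by rwa [Sym2.eq_swap])⟩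
  refine ⟨_, _, hsplit, fun h0 => h ?_, ?_⟩
  · rw [h0, add_zero] at hsplit
    have hαS : mgVerts α ⊆ S := hsplit ▸ mgVerts_indicator_sym2_subset S
    have hv : v ∈ mgVerts α := by
      obtain ⟨u, hu⟩ := mgVerts_nonempty hα
      rcases (hαS hu).cases_head with rfl | ⟨c, hvc, -⟩
      · exact hu
      · exact ⟨_, hvc, Sym2.mem_mk_left v c⟩
    refine ⟨fun u hu w hw => ?_, hv⟩
    have : Std.Symm (fun a b : Fin n => α s(a, b) ≠ 0) := ⟨fun a b hab => by rwa [Sym2.eq_swap]⟩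
    exact (Std.Symm.symm _ _ (hαS hu)).trans (hαS hw)
  · refine Set.disjoint_left.2 fun u hu hu' => mgVerts_indicator_sym2_subset Sᶜ hu' ?_
    rcases Set.mem_insert_iff.1 hu with rfl | hu
    · exact Relation.ReflTransGen.refl
    · exact mgVerts_indicator_sym2_subset S hu

theorem inf_add_inf_eq_self {β₁ β₂ : Sym2 (Fin n) → ℕ} (hsupp : ∀ e, β₁ e = 0 ∨ β₂ e = 0)
    (h : γ ≤ β₁ + β₂) : γ ⊓ β₁ + γ ⊓ β₂ = γ := by
  ext e
  have := h e
  rcases hsupp e with h | h <;> simp only [Pi.add_apply, Pi.inf_apply, h] at this ⊢ <;> omega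

theorem sum_Icc_prod_choose (α : Sym2 (Fin n) → ℕ) :
    ∑ β ∈ Finset.Icc 0 α, ∏ e, (α e).choose (β e) = 2 ^ mgEdges α := by
  rw [show Finset.Icc 0 α = Fintype.piFinset fun e => Finset.range (α e + 1) by
      ext β
      simp [Fintype.mem_piFinset, Pi.le_def],
    ← Finset.prod_univ_sum, mgEdges, ← Finset.prod_pow_eq_pow_sum]
  exact Finset.prod_congr rfl fun e _ => Nat.sum_range_choose (α e)

theorem sum_erase_prod_choose (α : Sym2 (Fin n) → ℕ) :
    ∑ β ∈ (Finset.Icc 0 α).erase α, (∏ e, ((α e).choose (β e) : ℝ)) = 2 ^ mgEdges α - 1 := by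
  have h := congrArg (Nat.cast : ℕ → ℝ) (sum_Icc_prod_choose α)
  push_cast at h
  rw [Finset.sum_erase_eq_sub (Finset.right_mem_Icc.2 (zero_le : 0 ≤ α)), h]
  simp

end Multigraph

section Moments

variable {lam ρ : ℝ} {α β γ : Sym2 (Fin n) → ℕ}

@[simp]
theorem momX_zero : momX lam ρ (0 : Sym2 (Fin n) → ℕ) = 1 := by
  simp [momX, mgEdges]

theorem momX_nonneg (hlam : 0 ≤ lam) (hρ : 0 ≤ ρ) : 0 ≤ momX lam ρ α := by
  unfold momX
  positivity

theorem momX_add (h : Disjoint (mgVerts β) (mgVerts γ)) :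
    momX lam ρ (β + γ) = momX lam ρ β * momX lam ρ γ := by
  rw [momX, momX, momX, mgEdges_add, mgVerts_add, Set.ncard_union_eq h, pow_add, pow_add]
  ring

theorem momxX_add {v : Fin n} (h : Disjoint (insert v (mgVerts β)) (mgVerts γ)) :
    momxX lam ρ v (β + γ) = momxX lam ρ v β * momX lam ρ γ := by
  rw [momxX, momxX, momX, mgEdges_add, mgVerts_add, ← Set.insert_union,
    Set.ncard_union_eq h, pow_add, pow_add]
  ring

theorem momxX_eq_momX {v : Fin n} (h : v ∈ mgVerts α) : momxX lam ρ v α = momX lam ρ α := by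
  rw [momxX, momX, Set.insert_eq_of_mem h]

theorem momX_mul_momX_sub_le (hlam : 0 ≤ lam) (hρ0 : 0 ≤ ρ) (hρ1 : ρ ≤ 1)
    (hconn : mgConnected α) (hβ0 : β ≠ 0) (hβα : β < α) :
    momX lam ρ β * momX lam ρ (α - β) ≤ ρ * momX lam ρ α := by
  have hsum : β + (α - β) = α := add_tsub_cancel_of_le hβα.le
  have hcard := ncard_mgVerts_add_lt (by rwa [hsum]) hβ0 (tsub_pos_of_lt hβα).ne'
  rw [hsum] at hcard
  calc momX lam ρ β * momX lam ρ (α - β)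
      = lam ^ mgEdges α * ρ ^ ((mgVerts β).ncard + (mgVerts (α - β)).ncard) := by
        rw [momX, momX, ← hsum, mgEdges_add, add_tsub_cancel_left, pow_add, pow_add]
        ring
    _ ≤ lam ^ mgEdges α * ρ ^ ((mgVerts α).ncard + 1) :=
        mul_le_mul_of_nonneg_left (pow_le_pow_of_le_one hρ0 hρ1 hcard) (by positivity)
    _ = ρ * momX lam ρ α := by
        rw [momX, pow_succ]
        ring

end Moments

namespace KappaRec

variable {lam ρ : ℝ} {v : Fin n} {κ : (Sym2 (Fin n) → ℕ) → ℝ}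

theorem apply_zero (hκ : KappaRec lam ρ v κ) : κ 0 = ρ := by
  rw [hκ 0, Finset.Icc_self, Finset.erase_singleton, Finset.sum_empty, sub_zero, momxX]
  simp [mgEdges]

theorem sum_Icc (hκ : KappaRec lam ρ v κ) (α : Sym2 (Fin n) → ℕ) :
    ∑ β ∈ Finset.Icc 0 α, κ β * (∏ e, ((α e).choose (β e) : ℝ)) * momX lam ρ (α - β) =
      momxX lam ρ v α := by
  rw [← Finset.sum_erase_add _ _ (Finset.right_mem_Icc.2 (zero_le : 0 ≤ α)), hκ α, tsub_self]
  simp [Pi.sub_def]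

theorem sum_Icc_left_add (hκ : KappaRec lam ρ v κ) {β₁ β₂ : Sym2 (Fin n) → ℕ}
    (hdisj : Disjoint (mgVerts β₁) (mgVerts β₂)) :
    ∑ γ ∈ Finset.Icc 0 β₁,
        κ γ * (∏ e, (((β₁ + β₂) e).choose (γ e) : ℝ)) * momX lam ρ (β₁ + β₂ - γ) =
      momxX lam ρ v β₁ * momX lam ρ β₂ := by
  rw [← hκ.sum_Icc β₁, Finset.sum_mul]
  refine Finset.sum_congr rfl fun γ hγ => ?_
  have hγ : γ ≤ β₁ := (Finset.mem_Icc.1 hγ).2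
  have hchoose : ∀ e, ((β₁ + β₂) e).choose (γ e) = (β₁ e).choose (γ e) := fun e => by
    rcases eq_zero_or_eq_zero_of_disjoint_mgVerts hdisj e with h | h
    · simp [h, Nat.eq_zero_of_le_zero (h ▸ hγ e)]
    · simp [h]
  rw [← tsub_add_eq_add_tsub hγ, momX_add (hdisj.mono_left (mgVerts_mono tsub_le_self))]
  simp only [hchoose]
  ring

theorem apply_add_eq_zero (hκ : KappaRec lam ρ v κ) {β₁ β₂ : Sym2 (Fin n) → ℕ}
    (hdisj : Disjoint (insert v (mgVerts β₁)) (mgVerts β₂)) (hβ₂ : β₂ ≠ 0) :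
    κ (β₁ + β₂) = 0 := by
  suffices ∀ β β₁ β₂, β₁ + β₂ = β → Disjoint (insert v (mgVerts β₁)) (mgVerts β₂) → β₂ ≠ 0 →
      κ β = 0 from this _ β₁ β₂ rfl hdisj hβ₂
  intro β
  induction β using WellFoundedLT.induction with
  | _ β ih =>
  rintro β₁ β₂ rfl hdisj hβ₂
  have hdisj' := hdisj.mono_left (Set.subset_insert v _)
  -- Any `γ ≤ β₁ + β₂` with `γ ≰ β₁` splits as `γ ⊓ β₁ + γ ⊓ β₂` with a nonzero second part.
  have hhigh : ∑ γ ∈ Finset.Icc 0 (β₁ + β₂) \ Finset.Icc 0 β₁,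
      κ γ * (∏ e, (((β₁ + β₂) e).choose (γ e) : ℝ)) * momX lam ρ (β₁ + β₂ - γ) =
        κ (β₁ + β₂) := by
    have hmem : β₁ + β₂ ∈ Finset.Icc 0 (β₁ + β₂) \ Finset.Icc 0 β₁ := by
      simpa [Finset.mem_sdiff] using hβ₂
    rw [Finset.sum_eq_single_of_mem _ hmem (fun γ hγ hγβ => ?_)]
    · simp
    simp only [Finset.mem_sdiff, Finset.mem_Icc] at hγ
    obtain ⟨⟨-, hγβ'⟩, hγβ₁⟩ := hγ
    have hsplit := inf_add_inf_eq_self (eq_zero_or_eq_zero_of_disjoint_mgVerts hdisj') hγβ'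
    have hκγ : κ γ = 0 := ih γ (lt_of_le_of_ne hγβ' hγβ) _ _ hsplit
      ((hdisj.mono_left (Set.insert_subset_insert (mgVerts_mono inf_le_right))).mono_right
        (mgVerts_mono inf_le_right))
      fun h => hγβ₁ ⟨zero_le, by simpa [h] using hsplit.symm.le⟩
    rw [hκγ, zero_mul, zero_mul]
  have hsum := hκ.sum_Icc (β₁ + β₂)
  rw [← Finset.sum_sdiff (Finset.Icc_subset_Icc_right le_self_add), hκ.sum_Icc_left_add hdisj',
    hhigh, momxX_add hdisj] at hsum
  linarith

theorem apply_eq_zero (hκ : KappaRec lam ρ v κ) {β : Sym2 (Fin n) → ℕ} (hβ : β ≠ 0)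
    (h : ¬(mgConnected β ∧ v ∈ mgVerts β)) : κ β = 0 := by
  obtain ⟨β₁, β₂, rfl, hβ₂, hdisj⟩ := exists_split_of_not_connected hβ h
  exact hκ.apply_add_eq_zero hdisj hβ₂

theorem term_nonneg_and_le (hκ : KappaRec lam ρ v κ) (hlam : 0 ≤ lam) (hρ0 : 0 ≤ ρ)
    (hρ1 : ρ ≤ 1) {α β : Sym2 (Fin n) → ℕ} (hconn : mgConnected α) (hβα : β < α)
    (ih : ∀ γ < α, mgConnected γ → v ∈ mgVerts γ → 0 ≤ κ γ ∧ κ γ ≤ momX lam ρ γ) :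
    0 ≤ κ β * (∏ e, ((α e).choose (β e) : ℝ)) * momX lam ρ (α - β) ∧
      κ β * (∏ e, ((α e).choose (β e) : ℝ)) * momX lam ρ (α - β) ≤
        (∏ e, ((α e).choose (β e) : ℝ)) * (ρ * momX lam ρ α) := by
  have hmom : 0 ≤ momX lam ρ α := momX_nonneg hlam hρ0
  rcases eq_or_ne β 0 with rfl | hβ0
  · simp only [hκ.apply_zero, Pi.zero_apply, Nat.choose_zero_right, Nat.cast_one,
      Finset.prod_const_one, tsub_zero]
    constructor <;> nlinarith
  by_cases hc : mgConnected β ∧ v ∈ mgVerts β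
  · obtain ⟨hκβ0, hκβ⟩ := ih β hβα hc.1 hc.2
    have hC : (0 : ℝ) ≤ ∏ e, ((α e).choose (β e) : ℝ) := by positivity
    have hmom' : 0 ≤ momX lam ρ (α - β) := momX_nonneg hlam hρ0
    refine ⟨by positivity, ?_⟩
    calc κ β * (∏ e, ((α e).choose (β e) : ℝ)) * momX lam ρ (α - β)
        ≤ momX lam ρ β * (∏ e, ((α e).choose (β e) : ℝ)) * momX lam ρ (α - β) := by gcongr
      _ = (∏ e, ((α e).choose (β e) : ℝ)) * (momX lam ρ β * momX lam ρ (α - β)) := by ring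
      _ ≤ (∏ e, ((α e).choose (β e) : ℝ)) * (ρ * momX lam ρ α) :=
        mul_le_mul_of_nonneg_left (momX_mul_momX_sub_le hlam hρ0 hρ1 hconn hβ0 hβα) hC
  · rw [hκ.apply_eq_zero hβ0 hc, zero_mul, zero_mul]
    exact ⟨le_rfl, by positivity⟩

theorem half_momX_le_and_le_momX (hκ : KappaRec lam ρ v κ) (hlam : 0 ≤ lam) (hρ0 : 0 ≤ ρ)
    {α : Sym2 (Fin n) → ℕ} (hρ : ρ * 2 ^ (mgEdges α + 1) ≤ 1) (hconn : mgConnected α)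
    (hv : v ∈ mgVerts α) :
    1 / 2 * momX lam ρ α ≤ κ α ∧ κ α ≤ momX lam ρ α := by
  induction α using WellFoundedLT.induction with
  | _ α ih =>
  have hρ1 : ρ ≤ 1 := le_trans (le_mul_of_one_le_right hρ0 (one_le_pow₀ one_le_two)) hρ
  have hih : ∀ γ < α, mgConnected γ → v ∈ mgVerts γ → 0 ≤ κ γ ∧ κ γ ≤ momX lam ρ γ := by
    intro γ hγ hc hv
    have hργ : ρ * 2 ^ (mgEdges γ + 1) ≤ 1 :=
      le_trans (by gcongr; exacts [one_le_two, mgEdges_mono hγ.le]) hρ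
    obtain ⟨hlow, hup⟩ := ih γ hγ hργ hc hv
    exact ⟨le_trans (mul_nonneg (by norm_num) (momX_nonneg hlam hρ0)) hlow, hup⟩
  have hterm := fun β (hβ : β ∈ (Finset.Icc 0 α).erase α) =>
    hκ.term_nonneg_and_le hlam hρ0 hρ1 hconn (lt_of_le_of_ne (Finset.mem_Icc.1
      (Finset.mem_of_mem_erase hβ)).2 (Finset.ne_of_mem_erase hβ)) hih
  have hsum_nonneg := Finset.sum_nonneg fun β hβ => (hterm β hβ).1
  have hsum_le := Finset.sum_le_sum fun β hβ => (hterm β hβ).2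
  rw [← Finset.sum_mul, sum_erase_prod_choose] at hsum_le
  have hmom : 0 ≤ momX lam ρ α := momX_nonneg hlam hρ0
  rw [hκ α, momxX_eq_momX hv]
  simp only [← Pi.sub_def]
  rw [pow_succ] at hρ
  constructor <;> nlinarith

end KappaRec

theorem mul_two_pow_succ_le_one {ρ : ℝ} {d : ℕ} (hρ : 0 < ρ)
    (hd : (d : ℝ) ≤ Real.logb 2 (1 / ρ) - 1) : ρ * 2 ^ (d + 1) ≤ 1 := by
  have h := (Real.le_logb_iff_rpow_le one_lt_two (one_div_pos.2 hρ)).1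
    (le_sub_iff_add_le.1 hd)
  rw [← Nat.cast_succ, Real.rpow_natCast, le_div_iff₀ hρ] at h
  rwa [mul_comm]

theorem kappa_sharp_bound_general {n : ℕ} (hn : 0 < n) (lam ρ : ℝ)
    (hlam0 : 0 ≤ lam) (hρ0 : 0 < ρ)
    (κ : (Sym2 (Fin n) → ℕ) → ℝ)
    (hκ : KappaRec lam ρ (⟨0, hn⟩ : Fin n) κ)
    (α : Sym2 (Fin n) → ℕ)
    (hconn : mgConnected α)
    (hv1 : (⟨0, hn⟩ : Fin n) ∈ mgVerts α)
    (hd2 : (mgEdges α : ℝ) ≤ Real.logb 2 (1 / ρ) - 1) :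
    (1 / 2) * lam ^ mgEdges α * ρ ^ (mgVerts α).ncard ≤ κ α ∧
    κ α ≤ lam ^ mgEdges α * ρ ^ (mgVerts α).ncard := by
  have h := hκ.half_momX_le_and_le_momX hlam0 hρ0.le (mul_two_pow_succ_le_one hρ0 hd2) hconn hv1
  rwa [momX, ← mul_assoc] at h

/-- **Lemma E.1 (sharp two-sided bound on small cumulants).** Suppose
`λ ≤ √(r/(e·ρ²·n))` for some `0 < r < 1`. If `α` is connected, spans vertex `1`,
and `1 ≤ |α| ≤ log₂(1/ρ) − 1`, then
`(1/2)·λ^{|α|}·ρ^{|V(α)|} ≤ κ_α ≤ λ^{|α|}·ρ^{|V(α)|}`. -/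
theorem kappa_sharp_bound {n : ℕ} (hn : 0 < n) (lam ρ r : ℝ)
    (hlam0 : 0 ≤ lam) (hρ0 : 0 < ρ) (hρ1 : ρ < 1) (hr0 : 0 < r) (hr1 : r < 1)
    (hlam : lam ≤ Real.sqrt (r / (Real.exp 1 * ρ ^ 2 * n)))
    (κ : (Sym2 (Fin n) → ℕ) → ℝ)
    (hκ : KappaRec lam ρ (⟨0, hn⟩ : Fin n) κ)
    (α : Sym2 (Fin n) → ℕ)
    (hconn : mgConnected α)
    (hv1 : (⟨0, hn⟩ : Fin n) ∈ mgVerts α)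
    (hd1 : 1 ≤ mgEdges α)
    (hd2 : (mgEdges α : ℝ) ≤ Real.logb 2 (1 / ρ) - 1) :
    (1 / 2) * lam ^ mgEdges α * ρ ^ (mgVerts α).ncard ≤ κ α ∧
    κ α ≤ lam ^ mgEdges α * ρ ^ (mgVerts α).ncard :=
  kappa_sharp_bound_general hn lam ρ hlam0 hρ0 κ hκ α hconn hv1 hd2
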